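/- arXiv:1609.04774 — 4 statements merged into one kernel-verified Lean document; each statement's English description precedes it below -/
import Mathlib

section
/- If f : [a,b] → ℝ is convex with a < b, then f((a+b)/2) ≤ (1/(b-a)) ∫_a^b f(x) dx ≤ (f(a)+f(b))/2. -/
/-!
Reflecting `x ↦ a + b - x` preserves the integral over `[a, b]`, so `∫ f` is also the integral
of the symmetrisation `(f x + f (a + b - x)) / 2`, which convexity bounds below pointwise by
`f ((a + b) / 2)`. On the other side, convexity bounds `f` above by the chord through
`(a, f a)` and `(b, f b)`, whose integral is `(b - a) (f a + f b) / 2`.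
-/

open MeasureTheory intervalIntegral

theorem ConvexOn.map_add_div_two_le {s : Set ℝ} {f : ℝ → ℝ} (hf : ConvexOn ℝ s f) {x y : ℝ}
    (hx : x ∈ s) (hy : y ∈ s) : f ((x + y) / 2) ≤ (f x + f y) / 2 := by
  have h := hf.2 hx hy (by norm_num : (0 : ℝ) ≤ 1 / 2) (by norm_num : (0 : ℝ) ≤ 1 / 2)
    (by norm_num)
  simp only [smul_eq_mul] at h
  calc f ((x + y) / 2) = f (1 / 2 * x + 1 / 2 * y) := by ring_nf
    _ ≤ 1 / 2 * f x + 1 / 2 * f y := h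
    _ = (f x + f y) / 2 := by ring

theorem ConvexOn.mul_le_chord {f : ℝ → ℝ} {a b x : ℝ} (hf : ConvexOn ℝ (Set.Icc a b) f)
    (hab : a < b) (hx : x ∈ Set.Icc a b) :
    (b - a) * f x ≤ (b - x) * f a + (x - a) * f b := by
  have hba : 0 < b - a := sub_pos.2 hab
  have h := hf.2 (Set.left_mem_Icc.2 hab.le) (Set.right_mem_Icc.2 hab.le)
    (div_nonneg (sub_nonneg.2 hx.2) hba.le) (div_nonneg (sub_nonneg.2 hx.1) hba.le)
    (by field_simp; ring)
  have hcomb : ((b - x) / (b - a)) • a + ((x - a) / (b - a)) • b = x := by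
    simp only [smul_eq_mul]; field_simp; ring
  rw [hcomb, smul_eq_mul, smul_eq_mul] at h
  calc (b - a) * f x ≤ (b - a) * ((b - x) / (b - a) * f a + (x - a) / (b - a) * f b) :=
        mul_le_mul_of_nonneg_left h hba.le
    _ = (b - x) * f a + (x - a) * f b := by field_simp

theorem IntervalIntegrable.comp_add_sub {f : ℝ → ℝ} {a b : ℝ}
    (hf : IntervalIntegrable f volume a b) :
    IntervalIntegrable (fun x => f (a + b - x)) volume a b := by
  simpa using (hf.comp_sub_left (a + b)).symm

theorem intervalIntegral.integral_comp_add_sub (f : ℝ → ℝ) (a b : ℝ) :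
    ∫ x in a..b, f (a + b - x) = ∫ x in a..b, f x := by
  rw [integral_comp_sub_left, add_sub_cancel_right, add_sub_cancel_left]

theorem intervalIntegral.integral_sub_mul_add_sub_mul (a b c d : ℝ) :
    ∫ x in a..b, ((b - x) * c + (x - a) * d) = (b - a) ^ 2 * (c + d) / 2 := by
  rw [integral_add (Continuous.intervalIntegrable (by fun_prop) a b)
    (Continuous.intervalIntegrable (by fun_prop) a b)]
  simp [integral_sub intervalIntegrable_const intervalIntegral.intervalIntegrable_id]
  ring

theorem mul_map_midpoint_le_integral_of_convexOn {f : ℝ → ℝ} {a b : ℝ} (hab : a ≤ b)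
    (hf : ConvexOn ℝ (Set.Icc a b) f) (hint : IntervalIntegrable f volume a b) :
    (b - a) * f ((a + b) / 2) ≤ ∫ x in a..b, f x := by
  have hpoint : ∀ x ∈ Set.Icc a b, f ((a + b) / 2) ≤ (f x + f (a + b - x)) / 2 := by
    intro x hx
    have hx' : a + b - x ∈ Set.Icc a b := ⟨by linarith [hx.2], by linarith [hx.1]⟩
    simpa using hf.map_add_div_two_le hx hx'
  calc (b - a) * f ((a + b) / 2) = ∫ _ in a..b, f ((a + b) / 2) := by simp
    _ ≤ ∫ x in a..b, (f x + f (a + b - x)) / 2 :=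
      integral_mono_on hab intervalIntegrable_const ((hint.add hint.comp_add_sub).div_const 2)
        hpoint
    _ = ∫ x in a..b, f x := by
      rw [intervalIntegral.integral_div, integral_add hint hint.comp_add_sub, integral_comp_add_sub]
      ring

theorem integral_le_of_convexOn {f : ℝ → ℝ} {a b : ℝ} (hab : a < b)
    (hf : ConvexOn ℝ (Set.Icc a b) f) (hint : IntervalIntegrable f volume a b) :
    ∫ x in a..b, f x ≤ (b - a) * ((f a + f b) / 2) := by
  have hba : 0 < b - a := sub_pos.2 hab
  refine le_of_mul_le_mul_left ?_ hba
  calc (b - a) * ∫ x in a..b, f x = ∫ x in a..b, (b - a) * f x :=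
        (intervalIntegral.integral_const_mul _ _).symm
    _ ≤ ∫ x in a..b, ((b - x) * f a + (x - a) * f b) :=
      integral_mono_on hab.le (hint.const_mul _)
        (Continuous.intervalIntegrable (by fun_prop) a b) fun x hx => hf.mul_le_chord hab hx
    _ = (b - a) * ((b - a) * ((f a + f b) / 2)) := by rw [integral_sub_mul_add_sub_mul]; ring

theorem hermite_hadamard (a b : ℝ) (hab : a < b) (f : ℝ → ℝ)
    (hconv : ConvexOn ℝ (Set.Icc a b) f)
    (hint : IntervalIntegrable f volume a b) :
    f ((a + b) / 2) ≤ (1 / (b - a)) * ∫ x in a..b, f x ∧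
      (1 / (b - a)) * ∫ x in a..b, f x ≤ (f a + f b) / 2 := by
  have hba : 0 < b - a := sub_pos.2 hab
  rw [one_div, le_inv_mul_iff₀ hba, inv_mul_le_iff₀ hba]
  exact ⟨mul_map_midpoint_le_integral_of_convexOn hab.le hconv hint,
    integral_le_of_convexOn hab hconv hint⟩
end

section
/- For α > 0, ρ > 0, and a continuous function f on [a,x] with 0 < a < x, the limit as ρ → 1 of the Katugampola fractional integral ^ρI^α_{a+}f(x) equals the Riemann–Liouville fractional integral J^α_{a+}f(x). -/
open MeasureTheory intervalIntegral Real Filter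

theorem katugampola_tendsto_riemann_liouville (a x α : ℝ) (ha : 0 < a) (hax : a < x)
    (hα : 0 < α) (f : ℝ → ℝ) (hf : ContinuousOn f (Set.Icc a x)) :
    Tendsto (fun ρ : ℝ =>
        (ρ ^ (1 - α) / Real.Gamma α) *
          ∫ t in a..x, t ^ (ρ - 1) * (x ^ ρ - t ^ ρ) ^ (α - 1) * f t)
      (nhdsWithin 1 (Set.Ioi (0 : ℝ)))
      (nhds ((1 / Real.Gamma α) * ∫ t in a..x, (x - t) ^ (α - 1) * f t)) := by
  have hx : 0 < x := ha.trans hax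
  set M : ℝ := max |Real.log a| |Real.log x| with hMdef
  have hM0 : 0 ≤ M := le_trans (abs_nonneg _) (le_max_left _ _)
  -- |log s| ≤ M for s ∈ [a, x]
  have hlog : ∀ s : ℝ, a ≤ s → s ≤ x → |Real.log s| ≤ M := by
    intro s h1 h2
    have hs : 0 < s := lt_of_lt_of_le ha h1
    rw [abs_le]
    constructor
    · have : Real.log a ≤ Real.log s := Real.log_le_log ha h1
      have h3 : -|Real.log a| ≤ Real.log a := neg_abs_le _
      have h4 : -M ≤ -|Real.log a| := by
        simp only [neg_le_neg_iff]
        exact le_max_left _ _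
      linarith
    · have h5 : Real.log s ≤ Real.log x := Real.log_le_log hs h2
      have h6 : Real.log x ≤ |Real.log x| := le_abs_self _
      have h7 : |Real.log x| ≤ M := le_max_right _ _
      linarith
  -- rpow bounds
  have hpow : ∀ s : ℝ, a ≤ s → s ≤ x → ∀ ρ : ℝ, ρ ∈ Set.Icc (1/2 : ℝ) 2 →
      Real.exp (-M) ≤ s ^ (ρ - 1) ∧ s ^ (ρ - 1) ≤ Real.exp M := by
    intro s h1 h2 ρ hρ
    have hs : 0 < s := lt_of_lt_of_le ha h1
    rw [Real.rpow_def_of_pos hs]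
    have habs : |(ρ - 1) * Real.log s| ≤ M := by
      rw [abs_mul]
      have h1' : |ρ - 1| ≤ 1 := by
        rw [abs_le]; exact ⟨by linarith [hρ.1], by linarith [hρ.2]⟩
      calc |ρ - 1| * |Real.log s| ≤ 1 * M :=
            mul_le_mul h1' (hlog s h1 h2) (abs_nonneg _) zero_le_one
        _ = M := one_mul M
    rw [mul_comm (Real.log s) (ρ - 1)]
    obtain ⟨hl, hr⟩ := abs_le.mp habs
    exact ⟨Real.exp_le_exp.2 hl, Real.exp_le_exp.2 hr⟩
  -- key lower bound via MVT
  have hkey : ∀ ρ : ℝ, ρ ∈ Set.Icc (1/2 : ℝ) 2 → ∀ t : ℝ, a ≤ t → t < x →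
      Real.exp (-M) / 2 * (x - t) ≤ x ^ ρ - t ^ ρ := by
    intro ρ hρ t h1 h2
    have ht : 0 < t := lt_of_lt_of_le ha h1
    obtain ⟨c, hc, hceq⟩ := exists_hasDerivAt_eq_slope (fun s : ℝ => s ^ ρ)
      (fun s : ℝ => ρ * s ^ (ρ - 1)) h2
      (fun s hs => by
        have hs0 : (0:ℝ) < s := lt_of_lt_of_le ht hs.1
        exact (Real.continuousAt_rpow_const s ρ (Or.inl hs0.ne')).continuousWithinAt)
      (fun s hs => Real.hasDerivAt_rpow_const (Or.inl (ne_of_gt (lt_trans ht hs.1))))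
    have hc1 : a ≤ c := h1.trans hc.1.le
    have hc2 : c ≤ x := hc.2.le
    have hcl := (hpow c hc1 hc2 ρ hρ).1
    have hxt : 0 < x - t := by linarith
    have heq : x ^ ρ - t ^ ρ = ρ * c ^ (ρ - 1) * (x - t) := by
      field_simp at hceq
      linarith [hceq]
    rw [heq]
    have h12 : (1:ℝ)/2 ≤ ρ := hρ.1
    have hce : 0 < Real.exp (-M) := Real.exp_pos _
    nlinarith [mul_le_mul hcl hxt.le (by linarith) (le_trans hce.le hcl)]
  -- bound on f
  obtain ⟨Mf, hMf⟩ := isCompact_Icc.exists_bound_of_continuousOn hf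
  have hMf0 : 0 ≤ Mf := le_trans (norm_nonneg _) (hMf a ⟨le_rfl, hax.le⟩)
  set c₂ : ℝ := Real.exp (-M) / 2 with hc₂def
  have hc₂ : 0 < c₂ := by positivity
  set K : ℝ := Real.exp M * Mf * (c₂ ^ (α - 1) + Real.exp (2 * M) ^ (α - 1)) with hKdef
  have hK0 : 0 ≤ K := by positivity
  -- upper bound x^ρ - t^ρ ≤ exp (2M)
  have hub : ∀ ρ : ℝ, ρ ∈ Set.Icc (1/2 : ℝ) 2 → ∀ t : ℝ, 0 ≤ t → t ≤ x →
      0 ≤ x ^ ρ - t ^ ρ ∧ x ^ ρ - t ^ ρ ≤ Real.exp (2 * M) := by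
    intro ρ hρ t h0 h2
    have hρ0 : (0:ℝ) < ρ := lt_of_lt_of_le (by norm_num) hρ.1
    have hmono : t ^ ρ ≤ x ^ ρ := Real.rpow_le_rpow h0 h2 hρ0.le
    refine ⟨by linarith, ?_⟩
    have hxρ : x ^ ρ ≤ Real.exp (2 * M) := by
      rw [Real.rpow_def_of_pos hx]
      apply Real.exp_le_exp.2
      have h1 : Real.log x * ρ ≤ |Real.log x| * 2 := by
        rcases le_or_gt 0 (Real.log x) with h | h
        · rw [abs_of_nonneg h]
          nlinarith [hρ.1, hρ.2]
        · nlinarith [hρ.1, hρ.2, abs_nonneg (Real.log x), neg_abs_le (Real.log x)]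
      have h2' : |Real.log x| ≤ M := le_max_right _ _
      nlinarith
    have ht0 : 0 ≤ t ^ ρ := Real.rpow_nonneg h0 _
    linarith
  -- the dominating function
  set bound : ℝ → ℝ := fun t => K * (x - t) ^ (α - 1) + K with hbdef
  have hΙ : Set.uIoc a x = Set.Ioc a x := Set.uIoc_of_le hax.le
  have hxae : ∀ᵐ t : ℝ, t ≠ x := by
    rw [ae_iff]
    have : {t : ℝ | ¬ t ≠ x} = {x} := by ext t; simp
    rw [this]
    exact measure_singleton x
  -- eventually ρ ∈ Icc (1/2) 2
  have hev : ∀ᶠ ρ : ℝ in nhdsWithin 1 (Set.Ioi (0:ℝ)), ρ ∈ Set.Icc (1/2 : ℝ) 2 := by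
    apply eventually_nhdsWithin_of_eventually_nhds
    have : Set.Icc (1/2 : ℝ) 2 ∈ nhds (1 : ℝ) :=
      Icc_mem_nhds (by norm_num) (by norm_num)
    exact eventually_of_mem this (fun ρ h => h)
  -- integral convergence
  have h2 : Tendsto (fun ρ : ℝ => ∫ t in a..x, t ^ (ρ - 1) * (x ^ ρ - t ^ ρ) ^ (α - 1) * f t)
      (nhdsWithin 1 (Set.Ioi (0:ℝ))) (nhds (∫ t in a..x, (x - t) ^ (α - 1) * f t)) := by
    apply intervalIntegral.tendsto_integral_filter_of_dominated_convergence bound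
    · -- measurability
      filter_upwards [hev] with ρ hρ
      rw [hΙ, ← MeasureTheory.Measure.restrict_congr_set MeasureTheory.Ioo_ae_eq_Ioc]
      have hρ0 : (0:ℝ) < ρ := lt_of_lt_of_le (by norm_num) hρ.1
      apply ContinuousOn.aestronglyMeasurable _ measurableSet_Ioo
      apply ContinuousOn.mul
      · apply ContinuousOn.mul
        · apply ContinuousOn.rpow_const continuousOn_id
          intro t ht
          exact Or.inl (ne_of_gt (ha.trans ht.1))
        · apply ContinuousOn.rpow_const
          · exact (continuousOn_const.sub
              (continuousOn_id.rpow_const (fun t ht => Or.inl (ne_of_gt (ha.trans ht.1)))))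
          · intro t ht
            left
            have h1 : t ^ ρ < x ^ ρ :=
              Real.rpow_lt_rpow (le_of_lt (ha.trans ht.1)) ht.2 hρ0
            linarith
      · exact hf.mono (fun t ht => ⟨ht.1.le, ht.2.le⟩)
    · -- bound
      filter_upwards [hev] with ρ hρ
      filter_upwards [hxae] with t htx ht
      rw [hΙ] at ht
      have hta : a < t := ht.1
      have htxlt : t < x := lt_of_le_of_ne ht.2 htx
      have ht0 : 0 < t := ha.trans hta
      have hfb : |f t| ≤ Mf := hMf t ⟨hta.le, ht.2⟩
      have hp1 : t ^ (ρ - 1) ≤ Real.exp M := (hpow t hta.le ht.2 ρ hρ).2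
      have hp1' : 0 ≤ t ^ (ρ - 1) := Real.rpow_nonneg ht0.le _
      have hxt : 0 < x - t := by linarith
      rw [Real.norm_eq_abs, abs_mul, abs_mul]
      have habs2 : |(x ^ ρ - t ^ ρ) ^ (α - 1)| = (x ^ ρ - t ^ ρ) ^ (α - 1) :=
        abs_of_nonneg (Real.rpow_nonneg (hub ρ hρ t ht0.le ht.2).1 _)
      rw [abs_of_nonneg hp1', habs2]
      have hbase_lb := hkey ρ hρ t hta.le htxlt
      have hbase_pos : 0 < x ^ ρ - t ^ ρ := lt_of_lt_of_le (by positivity) hbase_lb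
      rcases le_or_gt α 1 with hcase | hcase
      · -- α ≤ 1 : use lower bound on base
        have h1 : (x ^ ρ - t ^ ρ) ^ (α - 1) ≤ (c₂ * (x - t)) ^ (α - 1) :=
          Real.rpow_le_rpow_of_nonpos (by positivity) hbase_lb (by linarith)
        rw [Real.mul_rpow hc₂.le hxt.le] at h1
        have h2' : t ^ (ρ - 1) * ((x ^ ρ - t ^ ρ) ^ (α - 1)) * |f t|
            ≤ Real.exp M * (c₂ ^ (α - 1) * (x - t) ^ (α - 1)) * Mf := by
          apply mul_le_mul _ hfb (abs_nonneg _) (by positivity)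
          exact mul_le_mul hp1 h1 (Real.rpow_nonneg hbase_pos.le _) (Real.exp_pos _).le
        have h3 : Real.exp M * (c₂ ^ (α - 1) * (x - t) ^ (α - 1)) * Mf
            ≤ K * (x - t) ^ (α - 1) := by
          rw [hKdef]
          have h6 : (0:ℝ) ≤ Real.exp M * Mf * Real.exp (2 * M) ^ (α - 1) * (x - t) ^ (α - 1) := by
            have := Real.rpow_nonneg (Real.exp_pos (2*M)).le (α - 1)
            have := Real.rpow_nonneg hxt.le (α - 1)
            positivity
          nlinarith [h6]
        have h6 : (0:ℝ) ≤ K := hK0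
        calc t ^ (ρ - 1) * (x ^ ρ - t ^ ρ) ^ (α - 1) * |f t|
            ≤ K * (x - t) ^ (α - 1) := le_trans h2' h3
          _ ≤ bound t := by simp only [hbdef]; linarith
      · -- α > 1 : use upper bound on base
        have h1 : (x ^ ρ - t ^ ρ) ^ (α - 1) ≤ Real.exp (2 * M) ^ (α - 1) :=
          Real.rpow_le_rpow (hub ρ hρ t ht0.le ht.2).1 (hub ρ hρ t ht0.le ht.2).2 (by linarith)
        have h2' : t ^ (ρ - 1) * ((x ^ ρ - t ^ ρ) ^ (α - 1)) * |f t|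
            ≤ Real.exp M * Real.exp (2 * M) ^ (α - 1) * Mf := by
          apply mul_le_mul _ hfb (abs_nonneg _) (by positivity)
          exact mul_le_mul hp1 h1 (Real.rpow_nonneg hbase_pos.le _) (Real.exp_pos _).le
        have h3 : Real.exp M * Real.exp (2 * M) ^ (α - 1) * Mf ≤ K := by
          rw [hKdef]
          have h6 : (0:ℝ) ≤ Real.exp M * Mf * c₂ ^ (α - 1) := by
            have := Real.rpow_nonneg hc₂.le (α - 1)
            positivity
          nlinarith [h6]
        have h4 : (0:ℝ) ≤ K * (x - t) ^ (α - 1) :=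
          mul_nonneg hK0 (Real.rpow_nonneg hxt.le _)
        calc t ^ (ρ - 1) * (x ^ ρ - t ^ ρ) ^ (α - 1) * |f t| ≤ K := le_trans h2' h3
          _ ≤ bound t := by simp only [hbdef]; linarith
    · -- integrability of bound
      apply IntervalIntegrable.add
      · have h1 : IntervalIntegrable (fun s : ℝ => s ^ (α - 1)) volume (x - a) (x - x) :=
          intervalIntegrable_rpow' (by linarith)
        have h2' := h1.comp_sub_left x
        simpa using h2'.const_mul K
      · exact intervalIntegrable_const
    · -- pointwise limit
      filter_upwards [hxae] with t htx ht
      rw [hΙ] at ht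
      have hta : a < t := ht.1
      have htxlt : t < x := lt_of_le_of_ne ht.2 htx
      have ht0 : 0 < t := ha.trans hta
      have hxt : 0 < x - t := by linarith
      have c1 : ContinuousAt (fun ρ : ℝ => t ^ (ρ - 1)) 1 :=
        (Real.continuousAt_const_rpow ht0.ne').comp ((continuousAt_id).sub continuousAt_const)
      have cinner : ContinuousAt (fun ρ : ℝ => x ^ ρ - t ^ ρ) 1 :=
        (Real.continuousAt_const_rpow hx.ne').sub (Real.continuousAt_const_rpow ht0.ne')
      have c2 : ContinuousAt (fun ρ : ℝ => (x ^ ρ - t ^ ρ) ^ (α - 1)) 1 := by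
        apply ContinuousAt.rpow_const cinner
        left
        simp only [Real.rpow_one]
        linarith
      have call : ContinuousAt
          (fun ρ : ℝ => t ^ (ρ - 1) * (x ^ ρ - t ^ ρ) ^ (α - 1) * f t) 1 :=
        (c1.mul c2).mul continuousAt_const
      have := call.continuousWithinAt (s := Set.Ioi (0:ℝ))
      unfold ContinuousWithinAt at this
      simpa [Real.rpow_one, Real.rpow_zero] using this
  -- prefactor convergence
  have h1 : Tendsto (fun ρ : ℝ => ρ ^ (1 - α) / Real.Gamma α)
      (nhdsWithin 1 (Set.Ioi (0:ℝ))) (nhds (1 / Real.Gamma α)) := by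
    have hcont : ContinuousAt (fun ρ : ℝ => ρ ^ (1 - α) / Real.Gamma α) 1 :=
      ((Real.continuousAt_rpow_const 1 (1 - α) (Or.inl one_ne_zero)).div_const _)
    have := hcont.continuousWithinAt (s := Set.Ioi (0:ℝ))
    unfold ContinuousWithinAt at this
    simpa [Real.one_rpow] using this
  exact h1.mul h2
end

section
/- For α > 0 and a continuous function f on [a,x] with 0 < a < x, the limit as ρ → 0⁺ of the Katugampola fractional integral ^ρI^α_{a+}f(x) equals the Hadamard fractional integral H^α_{a+}f(x) = (1/Γ(α)) ∫_a^x (ln(x/t))^{α-1} f(t)/t dt. -/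
open MeasureTheory intervalIntegral Real Filter Set Topology

/-!
After moving `ρ ^ (1 - α)` inside the integral, the integrand becomes
`t ^ (ρ - 1) * ((x ^ ρ - t ^ ρ) / ρ) ^ (α - 1) * f t`. The quotient `(x ^ ρ - t ^ ρ) / ρ` is a
difference quotient of `ρ ↦ x ^ ρ - t ^ ρ` at `0`, so it tends to `log (x / t)`, and the integrand
tends pointwise to the Hadamard integrand. By the mean value theorem the quotient equals
`c ^ (ρ - 1) * (x - t)` for some `c ∈ (t, x)`, and for `ρ ∈ (0, 1]` the powers `s ^ (ρ - 1)`,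
`s ∈ [a, x]`, are bounded above and below by positive constants. Hence the integrand is dominated
by a multiple of `(x - t) ^ (α - 1)`, which is integrable as `α > 0`, and dominated convergence
applies.
-/

lemma rpow_mem_Icc_of_mem_Icc {a b s e : ℝ} (ha : 0 < a) (hs : s ∈ Icc a b)
    (he : e ∈ Icc (-1) 0) : s ^ e ∈ Icc (min 1 b⁻¹) (max 1 a⁻¹) := by
  have hs0 : 0 < s := ha.trans_le hs.1
  rcases le_or_gt 1 s with h | h
  · refine ⟨?_, ?_⟩
    · calc min 1 b⁻¹ ≤ b⁻¹ := min_le_right _ _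
        _ ≤ s⁻¹ := inv_anti₀ hs0 hs.2
        _ = s ^ (-1 : ℝ) := (rpow_neg_one s).symm
        _ ≤ s ^ e := rpow_le_rpow_of_exponent_le h he.1
    · calc s ^ e ≤ s ^ (0 : ℝ) := rpow_le_rpow_of_exponent_le h he.2
        _ = 1 := rpow_zero s
        _ ≤ max 1 a⁻¹ := le_max_left _ _
  · refine ⟨?_, ?_⟩
    · calc min 1 b⁻¹ ≤ 1 := min_le_left _ _
        _ = s ^ (0 : ℝ) := (rpow_zero s).symm
        _ ≤ s ^ e := rpow_le_rpow_of_exponent_ge hs0 h.le he.2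
    · calc s ^ e ≤ s ^ (-1 : ℝ) := rpow_le_rpow_of_exponent_ge hs0 h.le he.1
        _ = s⁻¹ := rpow_neg_one s
        _ ≤ a⁻¹ := inv_anti₀ ha hs.1
        _ ≤ max 1 a⁻¹ := le_max_right _ _

lemma rpow_le_max_of_mem_Icc {p q u : ℝ} (hp : 0 < p) (hu : u ∈ Icc p q) (r : ℝ) :
    u ^ r ≤ max (p ^ r) (q ^ r) := by
  rcases le_total 0 r with hr | hr
  · exact (rpow_le_rpow (hp.le.trans hu.1) hu.2 hr).trans (le_max_right _ _)
  · exact (rpow_le_rpow_of_nonpos hp hu.1 hr).trans (le_max_left _ _)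

lemma exists_rpow_sub_rpow_div_eq {t x ρ : ℝ} (ht : 0 < t) (htx : t < x) (hρ : ρ ≠ 0) :
    ∃ c ∈ Ioo t x, (x ^ ρ - t ^ ρ) / ρ = c ^ (ρ - 1) * (x - t) := by
  obtain ⟨c, hc, hslope⟩ := exists_hasDerivAt_eq_slope (fun s => s ^ ρ) (fun s => ρ * s ^ (ρ - 1))
    htx (continuousOn_id.rpow_const fun s hs => Or.inl (ht.trans_le hs.1).ne')
    (fun s hs => hasDerivAt_rpow_const (Or.inl (ht.trans hs.1).ne'))
  refine ⟨c, hc, ?_⟩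
  rw [eq_div_iff (sub_pos.2 htx).ne'] at hslope
  rw [div_eq_iff hρ, ← hslope]
  ring

lemma tendsto_rpow_sub_rpow_div_nhdsNE {t x : ℝ} (ht : 0 < t) (hx : 0 < x) :
    Tendsto (fun ρ : ℝ => (x ^ ρ - t ^ ρ) / ρ) (𝓝[≠] (0 : ℝ)) (𝓝 (log (x / t))) := by
  have hderiv : HasDerivAt (fun ρ : ℝ => x ^ ρ - t ^ ρ) (log x - log t) 0 := by
    simpa [Pi.sub_def] using (hasStrictDerivAt_const_rpow hx 0).hasDerivAt.sub
      (hasStrictDerivAt_const_rpow ht 0).hasDerivAt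
  rw [log_div hx.ne' ht.ne']
  simpa [div_eq_inv_mul] using hderiv.tendsto_slope_zero

noncomputable def katugampolaKernel (α x ρ t : ℝ) : ℝ :=
  t ^ (ρ - 1) * ((x ^ ρ - t ^ ρ) / ρ) ^ (α - 1)

lemma tendsto_katugampolaKernel {α x t : ℝ} (ht : 0 < t) (hx : 0 < x) (htx : t ≠ x) :
    Tendsto (fun ρ => katugampolaKernel α x ρ t) (𝓝[>] 0) (𝓝 (t⁻¹ * log (x / t) ^ (α - 1))) := by
  have hlog : log (x / t) ≠ 0 :=
    log_ne_zero_of_pos_of_ne_one (div_pos hx ht) ((div_eq_one_iff_eq ht.ne').not.2 htx.symm)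
  have hpow : Tendsto (fun ρ : ℝ => t ^ (ρ - 1)) (𝓝[>] 0) (𝓝 t⁻¹) := by
    have hcont : ContinuousAt (fun ρ : ℝ => t ^ (ρ - 1)) 0 :=
      (continuousAt_const_rpow ht.ne').comp (continuousAt_id.sub continuousAt_const)
    simpa [rpow_neg_one] using hcont.tendsto.mono_left nhdsWithin_le_nhds
  have hquot : Tendsto (fun ρ : ℝ => ((x ^ ρ - t ^ ρ) / ρ) ^ (α - 1)) (𝓝[>] 0)
      (𝓝 (log (x / t) ^ (α - 1))) :=
    ((continuousAt_rpow_const _ _ (Or.inl hlog)).tendsto.comp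
      (tendsto_rpow_sub_rpow_div_nhdsNE ht hx)).mono_left (nhdsGT_le_nhdsNE 0)
  exact hpow.mul hquot

lemma katugampolaKernel_nonneg {α x ρ t : ℝ} (ht : 0 ≤ t) (htx : t ≤ x) (hρ : 0 < ρ) :
    0 ≤ katugampolaKernel α x ρ t :=
  mul_nonneg (rpow_nonneg ht _)
    (rpow_nonneg (div_nonneg (sub_nonneg.2 (rpow_le_rpow ht htx hρ.le)) hρ.le) _)

lemma katugampolaKernel_le {a x α ρ t : ℝ} (ha : 0 < a) (ht : t ∈ Ico a x) (hρ : ρ ∈ Ioc 0 1) :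
    katugampolaKernel α x ρ t ≤
      max 1 a⁻¹ * max (min 1 x⁻¹ ^ (α - 1)) (max 1 a⁻¹ ^ (α - 1)) * (x - t) ^ (α - 1) := by
  obtain ⟨c, hc, hquot⟩ := exists_rpow_sub_rpow_div_eq (ha.trans_le ht.1) ht.2 hρ.1.ne'
  have he : ρ - 1 ∈ Icc (-1) 0 := ⟨by linarith [hρ.1], by linarith [hρ.2]⟩
  have hc_pow := rpow_mem_Icc_of_mem_Icc ha ⟨ht.1.trans hc.1.le, hc.2.le⟩ he
  have ht_pow := rpow_mem_Icc_of_mem_Icc ha ⟨ht.1, ht.2.le⟩ he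
  have hmin : 0 < min 1 x⁻¹ := lt_min one_pos (inv_pos.2 (ha.trans_le (ht.1.trans ht.2.le)))
  rw [katugampolaKernel, hquot, mul_rpow (hmin.le.trans hc_pow.1) (sub_nonneg.2 ht.2.le),
    ← mul_assoc]
  exact mul_le_mul_of_nonneg_right
    (mul_le_mul ht_pow.2 (rpow_le_max_of_mem_Icc hmin hc_pow _)
      (rpow_nonneg (hmin.le.trans hc_pow.1) _) (zero_le_one.trans (le_max_left _ _)))
    (rpow_nonneg (sub_nonneg.2 ht.2.le) _)

lemma intervalIntegrable_sub_rpow {a x r : ℝ} (hr : -1 < r) :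
    IntervalIntegrable (fun t => (x - t) ^ r) volume a x := by
  simpa using (intervalIntegrable_rpow' hr (a := x - a) (b := 0)).comp_sub_left x

lemma tendsto_integral_katugampolaKernel_mul {a x α : ℝ} {f : ℝ → ℝ} (ha : 0 < a) (hax : a ≤ x)
    (hα : 0 < α) (hf : ContinuousOn f (Icc a x)) :
    Tendsto (fun ρ => ∫ t in a..x, katugampolaKernel α x ρ t * f t) (𝓝[>] 0)
      (𝓝 (∫ t in a..x, log (x / t) ^ (α - 1) * (f t / t))) := by
  obtain ⟨M, hM⟩ := isCompact_Icc.exists_bound_of_continuousOn hf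
  set C := max 1 a⁻¹ * max (min 1 x⁻¹ ^ (α - 1)) (max 1 a⁻¹ ^ (α - 1))
  have hne : ∀ᵐ t ∂volume, t ≠ x := compl_mem_ae_iff.2 (measure_singleton x)
  refine tendsto_integral_filter_of_dominated_convergence (fun t => C * (x - t) ^ (α - 1) * M)
    ?_ ?_ ((intervalIntegrable_sub_rpow (by linarith)).const_mul C |>.mul_const M) ?_
  · refine Eventually.of_forall fun ρ => ?_
    have hmeas : Measurable (katugampolaKernel α x ρ) := by
      unfold katugampolaKernel
      fun_prop
    exact hmeas.aestronglyMeasurable.mul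
      ((hf.aestronglyMeasurable measurableSet_Icc).mono_set (uIoc_of_le hax ▸ Ioc_subset_Icc_self))
  · filter_upwards [Ioc_mem_nhdsGT one_pos] with ρ hρ
    filter_upwards [hne] with t htx ht
    rw [uIoc_of_le hax] at ht
    have ht' : t ∈ Ico a x := ⟨ht.1.le, lt_of_le_of_ne ht.2 htx⟩
    have hnonneg := katugampolaKernel_nonneg (α := α) (ha.trans ht.1).le ht.2 hρ.1
    rw [norm_mul, norm_of_nonneg hnonneg]
    exact mul_le_mul (katugampolaKernel_le ha ht' hρ) (hM t (Ioc_subset_Icc_self ht))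
      (norm_nonneg _) (hnonneg.trans (katugampolaKernel_le ha ht' hρ))
  · filter_upwards [hne] with t htx ht
    rw [uIoc_of_le hax] at ht
    have ht0 : 0 < t := ha.trans ht.1
    convert (tendsto_katugampolaKernel ht0 (ht0.trans_le ht.2) htx).mul_const (f t) using 2
    ring

lemma katugampolaKernel_eq {α x ρ t : ℝ} (ht : 0 ≤ t) (htx : t ≤ x) (hρ : 0 < ρ) :
    katugampolaKernel α x ρ t = ρ ^ (1 - α) * (t ^ (ρ - 1) * (x ^ ρ - t ^ ρ) ^ (α - 1)) := by
  rw [katugampolaKernel, div_rpow (sub_nonneg.2 (rpow_le_rpow ht htx hρ.le)) hρ.le,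
    show 1 - α = -(α - 1) by ring, rpow_neg hρ.le]
  ring

theorem katugampola_tendsto_hadamard (a x α : ℝ) (ha : 0 < a) (hax : a < x)
    (hα : 0 < α) (f : ℝ → ℝ) (hf : ContinuousOn f (Set.Icc a x)) :
    Tendsto (fun ρ : ℝ =>
        (ρ ^ (1 - α) / Real.Gamma α) *
          ∫ t in a..x, t ^ (ρ - 1) * (x ^ ρ - t ^ ρ) ^ (α - 1) * f t)
      (nhdsWithin 0 (Set.Ioi (0 : ℝ)))
      (nhds ((1 / Real.Gamma α) * ∫ t in a..x, (Real.log (x / t)) ^ (α - 1) * (f t / t))) := by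
  refine ((tendsto_integral_katugampolaKernel_mul ha hax.le hα hf).const_mul _).congr' ?_
  filter_upwards [self_mem_nhdsWithin] with ρ (hρ : 0 < ρ)
  have hscale : ρ ^ (1 - α) * ∫ t in a..x, t ^ (ρ - 1) * (x ^ ρ - t ^ ρ) ^ (α - 1) * f t =
      ∫ t in a..x, katugampolaKernel α x ρ t * f t := by
    rw [← intervalIntegral.integral_const_mul]
    refine integral_congr fun t ht => ?_
    rw [uIcc_of_le hax.le] at ht
    rw [katugampolaKernel_eq (ha.le.trans ht.1) ht.2 hρ]
    ring
  rw [← hscale]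
  ring
end

section
/- Let α > 0, ρ > 0, 0 ≤ a < b, and let f : [a^ρ, b^ρ] → ℝ be a positive convex integrable function. Then f((a^ρ+b^ρ)/2) ≤ (ρ^α Γ(α+1)/(2(b^ρ − a^ρ)^α)) [^ρI^α_{a+}(f∘(·)^ρ)(b) + ^ρI^α_{b-}(f∘(·)^ρ)(a)] ≤ (f(a^ρ)+f(b^ρ))/2. -/
open MeasureTheory intervalIntegral Real Set

/-!
Substituting `u = t ^ ρ` turns both Katugampola integrals into Riemann–Liouville integrals of `f`
over `[A, B] = [a ^ ρ, b ^ ρ]`, and the reflection `u ↦ A + B - u` turns the right-sided one into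
`∫ (B - u) ^ (α - 1) * f (A + B - u)`. Convexity squeezes `f u + f (A + B - u)` between
`2 f ((A + B) / 2)` and `f A + f B`; integrating against the weight `(B - u) ^ (α - 1)`, whose
integral is `(B - A) ^ α / α`, gives both inequalities. A convex function on `[A, B]` is bounded
and continuous on `(A, B)`, hence integrable against every integrable weight.
-/
section ConvexOnIcc

variable {f : ℝ → ℝ} {A B : ℝ}

lemma add_sub_mem_Icc {u : ℝ} (hu : u ∈ Icc A B) : A + B - u ∈ Icc A B :=
  ⟨by linarith [hu.2], by linarith [hu.1]⟩

lemma ConvexOn.comp_add_sub (hf : ConvexOn ℝ (Icc A B) f) :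
    ConvexOn ℝ (Icc A B) (fun u => f (A + B - u)) := by
  refine ⟨convex_Icc A B, fun x hx y hy s t hs ht hst => ?_⟩
  convert hf.2 (add_sub_mem_Icc hx) (add_sub_mem_Icc hy) hs ht hst using 2
  simp only [smul_eq_mul]
  linear_combination -(A + B) * hst

lemma ConvexOn.two_mul_map_midpoint_le (hf : ConvexOn ℝ (Icc A B) f) {u : ℝ} (hu : u ∈ Icc A B) :
    2 * f ((A + B) / 2) ≤ f u + f (A + B - u) := by
  have h := hf.2 hu (add_sub_mem_Icc hu) (by norm_num : (0 : ℝ) ≤ 1 / 2)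
    (by norm_num : (0 : ℝ) ≤ 1 / 2) (by norm_num)
  simp only [smul_eq_mul] at h
  rw [show 1 / 2 * u + 1 / 2 * (A + B - u) = (A + B) / 2 by ring] at h
  linarith

lemma ConvexOn.add_map_add_sub_le (hf : ConvexOn ℝ (Icc A B) f) {u : ℝ} (hu : u ∈ Icc A B) :
    f u + f (A + B - u) ≤ f A + f B := by
  have hAB : A ≤ B := hu.1.trans hu.2
  obtain ⟨s, t, hs, ht, hst, rfl⟩ : u ∈ segment ℝ A B := by rwa [segment_eq_Icc hAB]
  have hA := left_mem_Icc.2 hAB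
  have hB := right_mem_Icc.2 hAB
  have h₁ := hf.2 hA hB hs ht hst
  have h₂ := hf.2 hA hB ht hs (by linarith)
  have hrefl : A + B - (s • A + t • B) = t • A + s • B := by
    simp only [smul_eq_mul]; linear_combination -(A + B) * hst
  rw [hrefl]
  simp only [smul_eq_mul] at h₁ h₂ ⊢
  linear_combination h₁ + h₂ + (f A + f B) * hst

lemma ConvexOn.exists_abs_le_of_mem_Icc (hf : ConvexOn ℝ (Icc A B) f) :
    ∃ C, ∀ u ∈ Icc A B, |f u| ≤ C := by
  refine ⟨max |2 * f ((A + B) / 2) - max (f A) (f B)| |max (f A) (f B)|, fun u hu => ?_⟩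
  have hAB : A ≤ B := hu.1.trans hu.2
  have hle : ∀ v ∈ Icc A B, f v ≤ max (f A) (f B) := fun v hv =>
    hf.le_on_segment (left_mem_Icc.2 hAB) (right_mem_Icc.2 hAB) (by rwa [segment_eq_Icc hAB])
  refine abs_le_max_abs_abs ?_ (hle u hu)
  linarith [hf.two_mul_map_midpoint_le hu, hle _ (add_sub_mem_Icc hu)]

lemma ConvexOn.intervalIntegrable_mul (hf : ConvexOn ℝ (Icc A B) f) (hAB : A ≤ B) {w : ℝ → ℝ}
    (hw : IntervalIntegrable w volume A B) :
    IntervalIntegrable (fun u => w u * f u) volume A B := by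
  obtain ⟨C, hC⟩ := hf.exists_abs_le_of_mem_Icc
  rw [intervalIntegrable_iff_integrableOn_Ioc_of_le hAB] at hw ⊢
  have hmeas : AEStronglyMeasurable f (volume.restrict (Ioc A B)) := by
    rw [← Measure.restrict_congr_set Ioo_ae_eq_Ioc]
    exact (interior_Icc (a := A) (b := B) ▸ hf.continuousOn_interior).aestronglyMeasurable
      measurableSet_Ioo
  exact hw.mul_bdd hmeas ((ae_restrict_mem measurableSet_Ioc).mono fun u hu =>
    hC u (Ioc_subset_Icc_self hu))

theorem ConvexOn.hermite_hadamard_weighted (hf : ConvexOn ℝ (Icc A B) f) (hAB : A ≤ B)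
    {w : ℝ → ℝ} (hw : IntervalIntegrable w volume A B) (hw₀ : ∀ u ∈ Icc A B, 0 ≤ w u) :
    2 * f ((A + B) / 2) * ∫ u in A..B, w u ≤
        (∫ u in A..B, w u * f u) + ∫ u in A..B, w u * f (A + B - u) ∧
      (∫ u in A..B, w u * f u) + ∫ u in A..B, w u * f (A + B - u) ≤
        (f A + f B) * ∫ u in A..B, w u := by
  have hint₁ := hf.intervalIntegrable_mul hAB hw
  have hint₂ := hf.comp_add_sub.intervalIntegrable_mul hAB hw
  rw [← integral_add hint₁ hint₂, ← intervalIntegral.integral_const_mul,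
    ← intervalIntegral.integral_const_mul]
  simp only [← mul_add]
  have hint : IntervalIntegrable (fun u => w u * (f u + f (A + B - u))) volume A B := by
    simpa only [mul_add] using hint₁.add hint₂
  constructor
  · refine integral_mono_on hAB (hw.const_mul _) hint fun u hu => ?_
    exact (mul_comm _ _).trans_le
      (mul_le_mul_of_nonneg_left (hf.two_mul_map_midpoint_le hu) (hw₀ u hu))
  · refine integral_mono_on hAB hint (hw.const_mul _) fun u hu => ?_
    exact (mul_le_mul_of_nonneg_left (hf.add_map_add_sub_le hu) (hw₀ u hu)).trans_eq
      (mul_comm _ _)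

end ConvexOnIcc

theorem integral_rpow_sub_one_mul_comp_rpow {a b ρ : ℝ} (ha : 0 ≤ a) (hb : 0 ≤ b) (hρ : 0 < ρ)
    (g : ℝ → ℝ) :
    ∫ t in a..b, t ^ (ρ - 1) * g (t ^ ρ) = ρ⁻¹ * ∫ u in a ^ ρ..b ^ ρ, g u := by
  have hsubst := integral_comp_mul_deriv_of_deriv_nonneg (f := fun t => t ^ ρ)
    (f' := fun t => ρ * t ^ (ρ - 1)) (g := g)
    (continuousOn_id.rpow_const fun _ _ => Or.inr hρ.le)
    (fun t ht => hasDerivAt_rpow_const (p := ρ) (Or.inl ((le_min ha hb).trans_lt ht.1).ne'))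
    (fun t ht => mul_nonneg hρ.le (rpow_nonneg (le_min ha hb |>.trans ht.1.le) _))
  rw [← hsubst, ← intervalIntegral.integral_const_mul]
  congr 1 with t
  field_simp
  rfl

section RiemannLiouvilleKernel

variable {A B α : ℝ}

lemma intervalIntegrable_sub_rpow_s6 (hα : 0 < α) :
    IntervalIntegrable (fun u => (B - u) ^ (α - 1)) volume A B := by
  simpa using (intervalIntegrable_rpow' (a := B - A) (b := 0)
    (by linarith : (-1 : ℝ) < α - 1)).comp_sub_left B

lemma integral_sub_rpow (hα : 0 < α) :
    ∫ u in A..B, (B - u) ^ (α - 1) = (B - A) ^ α / α := by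
  rw [integral_comp_sub_left (fun x => x ^ (α - 1)) B, sub_self,
    integral_rpow (Or.inl (by linarith)), sub_add_cancel, zero_rpow hα.ne', sub_zero]

lemma integral_rpow_sub_mul_eq_integral_sub_rpow_mul (f : ℝ → ℝ) :
    ∫ u in A..B, (u - A) ^ (α - 1) * f u = ∫ u in A..B, (B - u) ^ (α - 1) * f (A + B - u) := by
  have h := integral_comp_sub_left (a := A) (b := B) (fun u => (u - A) ^ (α - 1) * f u) (A + B)
  simp only [add_sub_cancel_right, add_sub_cancel_left,
    show ∀ u, A + B - u - A = B - u from fun u => by ring] at h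
  exact h.symm

end RiemannLiouvilleKernel

lemma katugampola_normalization {α ρ D I₁ I₂ : ℝ} (hα : 0 < α) (hρ : 0 < ρ) :
    ρ ^ α * Gamma (α + 1) / (2 * D) *
        (ρ ^ (1 - α) / Gamma α * (ρ⁻¹ * I₁) + ρ ^ (1 - α) / Gamma α * (ρ⁻¹ * I₂)) =
      (I₁ + I₂) / (2 * (D / α)) := by
  rw [Gamma_add_one hα.ne']
  have hΓ := Gamma_pos_of_pos hα
  have hρρ : ρ ^ α * ρ ^ (1 - α) = ρ := by rw [← rpow_add hρ]; norm_num
  field_simp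
  rw [hρρ]

theorem katugampola_hermite_hadamard_general (a b α ρ : ℝ) (ha : 0 ≤ a) (hab : a < b)
    (hα : 0 < α) (hρ : 0 < ρ) (f : ℝ → ℝ)
    (hconv : ConvexOn ℝ (Set.Icc (a ^ ρ) (b ^ ρ)) f) :
    f ((a ^ ρ + b ^ ρ) / 2) ≤
      (ρ ^ α * Real.Gamma (α + 1) / (2 * (b ^ ρ - a ^ ρ) ^ α)) *
        ((ρ ^ (1 - α) / Real.Gamma α) *
            (∫ t in a..b, t ^ (ρ - 1) * (b ^ ρ - t ^ ρ) ^ (α - 1) * f (t ^ ρ)) +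
         (ρ ^ (1 - α) / Real.Gamma α) *
            (∫ t in a..b, t ^ (ρ - 1) * (t ^ ρ - a ^ ρ) ^ (α - 1) * f (t ^ ρ))) ∧
    (ρ ^ α * Real.Gamma (α + 1) / (2 * (b ^ ρ - a ^ ρ) ^ α)) *
        ((ρ ^ (1 - α) / Real.Gamma α) *
            (∫ t in a..b, t ^ (ρ - 1) * (b ^ ρ - t ^ ρ) ^ (α - 1) * f (t ^ ρ)) +
         (ρ ^ (1 - α) / Real.Gamma α) *
            (∫ t in a..b, t ^ (ρ - 1) * (t ^ ρ - a ^ ρ) ^ (α - 1) * f (t ^ ρ))) ≤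
      (f (a ^ ρ) + f (b ^ ρ)) / 2 := by
  have hAB : a ^ ρ < b ^ ρ := rpow_lt_rpow ha hab hρ
  have hJ₁ := integral_rpow_sub_one_mul_comp_rpow ha (ha.trans hab.le) hρ
    fun u => (b ^ ρ - u) ^ (α - 1) * f u
  have hJ₂ := integral_rpow_sub_one_mul_comp_rpow ha (ha.trans hab.le) hρ
    fun u => (u - a ^ ρ) ^ (α - 1) * f u
  simp only [← mul_assoc] at hJ₁ hJ₂
  rw [hJ₁, hJ₂, integral_rpow_sub_mul_eq_integral_sub_rpow_mul, katugampola_normalization hα hρ,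
    ← integral_sub_rpow hα]
  obtain ⟨hlow, hup⟩ := hconv.hermite_hadamard_weighted hAB.le (intervalIntegrable_sub_rpow_s6 hα)
    fun u hu => rpow_nonneg (sub_nonneg.2 hu.2) _
  have hW : 0 < ∫ u in a ^ ρ..b ^ ρ, (b ^ ρ - u) ^ (α - 1) := by
    rw [integral_sub_rpow hα]
    have := sub_pos.2 hAB
    positivity
  constructor
  · rw [le_div_iff₀ (by positivity)]
    linarith
  · rw [div_le_iff₀ (by positivity)]
    linarith

theorem katugampola_hermite_hadamard (a b α ρ : ℝ) (ha : 0 ≤ a) (hab : a < b)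
    (hα : 0 < α) (hρ : 0 < ρ) (f : ℝ → ℝ)
    (hpos : ∀ x ∈ Set.Icc (a ^ ρ) (b ^ ρ), 0 < f x)
    (hconv : ConvexOn ℝ (Set.Icc (a ^ ρ) (b ^ ρ)) f)
    (hint : IntervalIntegrable f volume (a ^ ρ) (b ^ ρ)) :
    f ((a ^ ρ + b ^ ρ) / 2) ≤
      (ρ ^ α * Real.Gamma (α + 1) / (2 * (b ^ ρ - a ^ ρ) ^ α)) *
        ((ρ ^ (1 - α) / Real.Gamma α) *
            (∫ t in a..b, t ^ (ρ - 1) * (b ^ ρ - t ^ ρ) ^ (α - 1) * f (t ^ ρ)) +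
         (ρ ^ (1 - α) / Real.Gamma α) *
            (∫ t in a..b, t ^ (ρ - 1) * (t ^ ρ - a ^ ρ) ^ (α - 1) * f (t ^ ρ))) ∧
    (ρ ^ α * Real.Gamma (α + 1) / (2 * (b ^ ρ - a ^ ρ) ^ α)) *
        ((ρ ^ (1 - α) / Real.Gamma α) *
            (∫ t in a..b, t ^ (ρ - 1) * (b ^ ρ - t ^ ρ) ^ (α - 1) * f (t ^ ρ)) +
         (ρ ^ (1 - α) / Real.Gamma α) *
            (∫ t in a..b, t ^ (ρ - 1) * (t ^ ρ - a ^ ρ) ^ (α - 1) * f (t ^ ρ))) ≤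
      (f (a ^ ρ) + f (b ^ ρ)) / 2 :=
  katugampola_hermite_hadamard_general a b α ρ ha hab hα hρ f hconv
end
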